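/- arXiv:2010.09153 — 3 statements merged into one kernel-verified Lean document; each statement's English description precedes it below -/
import Mathlib

section
/- Let A be an n×n real symmetric positive definite matrix and let (x, ξ) ∈ ℝⁿ × ℝⁿ satisfy ⟨A⁻¹x, x⟩ = 1, ⟨A⁻¹x, ξ⟩ = 0 and ‖ξ‖ = 1. Then L(x, ξ) is positive semidefinite and its kernel is exactly the two-dimensional span of {ξ, A⁻¹x}. Consequently the eigenvalues of L(x, ξ), listed with multiplicity, are 0 = 0 < λ₁ ≤ … ≤ λ_{n−2}: the eigenvalue 0 has multiplicity exactly two and the remaining n−2 eigenvalues are strictly positive. -/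
/-!
Put `u = A⁻¹x`, so that `A u = x` and `⟨u, x⟩ = 1`. Completing the square gives
`⟨w, (A - x xᵀ) w⟩ = ⟨z, A z⟩` with `z = w - ⟨x, w⟩ u`, hence `A - x xᵀ` is positive
semidefinite with kernel `ℝ u`. The Lax matrix is its compression by the symmetric projection
`P_ξ`, so it is positive semidefinite with kernel `P_ξ⁻¹(ℝ u) = span {ξ, u}`, and `ξ, u` are
independent because `u ⊥ ξ` and `u ≠ 0`.
-/

open Matrix

/-- The orthogonal projection onto the hyperplane orthogonal to a unit vector `ξ`:
`P_ξ = I - ξ ξᵀ`. -/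
noncomputable def projPerp {n : ℕ} (ξ : Fin n → ℝ) : Matrix (Fin n) (Fin n) ℝ :=
  1 - vecMulVec ξ ξ

/-- Moser's Lax matrix `L(x, ξ) = P_ξ (A - x xᵀ) P_ξ`. -/
noncomputable def moserLax {n : ℕ} (A : Matrix (Fin n) (Fin n) ℝ) (x ξ : Fin n → ℝ) :
    Matrix (Fin n) (Fin n) ℝ :=
  projPerp ξ * (A - vecMulVec x x) * projPerp ξ

open Module Submodule ComplexOrder

theorem finrank_span_pair {K V : Type*} [DivisionRing K] [AddCommGroup V] [Module K V] {v w : V}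
    (h : LinearIndependent K ![v, w]) : finrank K (span K {v, w}) = 2 := by
  rw [← Matrix.range_cons_cons_empty, finrank_span_eq_card h, Fintype.card_fin]

namespace Matrix

variable {ι : Type*} [Fintype ι]

theorem PosSemidef.ker_conjTranspose_mul_mul_same {𝕜 m : Type*} [RCLike 𝕜] [Fintype m]
    {B : Matrix ι ι 𝕜} (hB : B.PosSemidef) (M : Matrix ι m 𝕜) :
    LinearMap.ker (Mᴴ * B * M).mulVecLin = (LinearMap.ker B.mulVecLin).comap M.mulVecLin := by
  ext v
  simp only [LinearMap.mem_ker, mem_comap, mulVecLin_apply]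
  rw [← hB.dotProduct_mulVec_zero_iff,
    ← (hB.conjTranspose_mul_mul_same M).dotProduct_mulVec_zero_iff, star_mulVec,
    ← mulVec_mulVec, ← mulVec_mulVec, dotProduct_mulVec]

theorem linearIndependent_pair_of_dotProduct_eq_zero {ξ u : ι → ℝ} (hξ : ξ ⬝ᵥ ξ = 1)
    (hξu : ξ ⬝ᵥ u = 0) (hu : u ≠ 0) : LinearIndependent ℝ ![ξ, u] := by
  have hξ0 : ξ ≠ 0 := by rintro rfl; simp at hξ
  rw [LinearIndependent.pair_iff' hξ0]
  rintro a rfl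
  rw [dotProduct_smul, hξ, smul_eq_mul, mul_one] at hξu
  exact hu (by rw [hξu, zero_smul])

theorem dotProduct_sub_vecMulVec_mulVec_self {A : Matrix ι ι ℝ} (hA : A.IsSymm) {x u : ι → ℝ}
    (hAu : A *ᵥ u = x) (hux : u ⬝ᵥ x = 1) (w : ι → ℝ) :
    w ⬝ᵥ ((A - vecMulVec x x) *ᵥ w) =
      (w - (x ⬝ᵥ w) • u) ⬝ᵥ (A *ᵥ (w - (x ⬝ᵥ w) • u)) := by
  have huA : u ⬝ᵥ (A *ᵥ w) = x ⬝ᵥ w := by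
    rw [dotProduct_mulVec, ← mulVec_transpose, hA.eq, hAu]
  simp only [sub_mulVec, vecMulVec_mulVec, op_smul_eq_smul, mulVec_sub, mulVec_smul, hAu,
    dotProduct_sub, sub_dotProduct, dotProduct_smul, smul_dotProduct, huA, hux,
    dotProduct_comm w x, smul_eq_mul]
  ring

variable {A : Matrix ι ι ℝ} {x u : ι → ℝ}

theorem PosDef.posSemidef_sub_vecMulVec (hA : A.PosDef) (hAu : A *ᵥ u = x) (hux : u ⬝ᵥ x = 1) :
    (A - vecMulVec x x).PosSemidef := by
  refine .of_dotProduct_mulVec_nonneg (hA.isHermitian.sub ?_) fun w => ?_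
  · simp [IsHermitian]
  · simpa [dotProduct_sub_vecMulVec_mulVec_self (isHermitian_iff_isSymm.mp hA.isHermitian) hAu
      hux] using hA.posSemidef.dotProduct_mulVec_nonneg (w - (x ⬝ᵥ w) • u)

theorem PosDef.ker_sub_vecMulVec (hA : A.PosDef) (hAu : A *ᵥ u = x) (hux : u ⬝ᵥ x = 1) :
    LinearMap.ker (A - vecMulVec x x).mulVecLin = ℝ ∙ u := by
  ext w
  rw [LinearMap.mem_ker, mulVecLin_apply, mem_span_singleton]
  constructor
  · intro hw
    have hq : w ⬝ᵥ ((A - vecMulVec x x) *ᵥ w) = 0 := by rw [hw, dotProduct_zero]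
    rw [dotProduct_sub_vecMulVec_mulVec_self (isHermitian_iff_isSymm.mp hA.isHermitian) hAu hux]
      at hq
    have hz : w - (x ⬝ᵥ w) • u = 0 := by
      by_contra hz
      exact (hA.dotProduct_mulVec_pos hz).ne' (by simpa using hq)
    exact ⟨_, (sub_eq_zero.mp hz).symm⟩
  · rintro ⟨a, rfl⟩
    rw [mulVec_smul, sub_mulVec, vecMulVec_mulVec, hAu, dotProduct_comm, hux]
    simp

end Matrix

section MoserLax

variable {n : ℕ}

theorem projPerp_mulVec (ξ v : Fin n → ℝ) : projPerp ξ *ᵥ v = v - (ξ ⬝ᵥ v) • ξ := by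
  rw [projPerp, sub_mulVec, one_mulVec, vecMulVec_mulVec, op_smul_eq_smul]

theorem isHermitian_projPerp (ξ : Fin n → ℝ) : (projPerp ξ).IsHermitian := by
  simp [projPerp, IsHermitian]

theorem moserLax_eq_conjTranspose_mul_mul (A : Matrix (Fin n) (Fin n) ℝ) (x ξ : Fin n → ℝ) :
    moserLax A x ξ = (projPerp ξ)ᴴ * (A - vecMulVec x x) * projPerp ξ := by
  rw [(isHermitian_projPerp ξ).eq, moserLax]

theorem comap_projPerp_span_singleton {ξ u : Fin n → ℝ} (hξ : ξ ⬝ᵥ ξ = 1) (hξu : ξ ⬝ᵥ u = 0) :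
    (ℝ ∙ u).comap (projPerp ξ).mulVecLin = span ℝ {ξ, u} := by
  ext v
  rw [mem_comap, mulVecLin_apply, projPerp_mulVec, mem_span_singleton, mem_span_pair]
  constructor
  · rintro ⟨b, hb⟩
    exact ⟨ξ ⬝ᵥ v, b, by rw [hb, add_sub_cancel]⟩
  · rintro ⟨a, b, rfl⟩
    refine ⟨b, ?_⟩
    simp only [dotProduct_add, dotProduct_smul, hξ, hξu, smul_eq_mul, mul_one, mul_zero, add_zero]
    abel

end MoserLax

/-- For `(x, ξ) ∈ S*E_A` with `A` symmetric positive definite, `L(x, ξ)` is positive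
semidefinite with kernel exactly the two-dimensional span of `{ξ, A⁻¹x}`;
equivalently, the eigenvalue `0` has multiplicity exactly two and the remaining
`n - 2` eigenvalues are strictly positive. -/
theorem stmt3 {n : ℕ} (A : Matrix (Fin n) (Fin n) ℝ) (hA : A.PosDef)
    (x ξ : Fin n → ℝ) (hx : A⁻¹.mulVec x ⬝ᵥ x = 1)
    (hperp : A⁻¹.mulVec x ⬝ᵥ ξ = 0) (hnorm : ξ ⬝ᵥ ξ = 1) :
    (moserLax A x ξ).PosSemidef ∧
    LinearMap.ker (moserLax A x ξ).mulVecLin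
      = Submodule.span ℝ ({ξ, A⁻¹.mulVec x} : Set (Fin n → ℝ)) ∧
    Module.finrank ℝ (LinearMap.ker (moserLax A x ξ).mulVecLin) = 2 := by
  set u := A⁻¹ *ᵥ x
  have hAu : A *ᵥ u = x := by
    rw [mulVec_mulVec, mul_nonsing_inv A hA.det_pos.ne'.isUnit, one_mulVec]
  have hξu : ξ ⬝ᵥ u = 0 := by rw [dotProduct_comm, hperp]
  have hB := hA.posSemidef_sub_vecMulVec hAu hx
  have hker : LinearMap.ker (moserLax A x ξ).mulVecLin = span ℝ {ξ, u} := by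
    rw [moserLax_eq_conjTranspose_mul_mul, hB.ker_conjTranspose_mul_mul_same,
      hA.ker_sub_vecMulVec hAu hx, comap_projPerp_span_singleton hnorm hξu]
  refine ⟨?_, hker, ?_⟩
  · rw [moserLax_eq_conjTranspose_mul_mul]
    exact hB.conjTranspose_mul_mul_same _
  · have hu : u ≠ 0 := by rintro hu; simp [hu] at hx
    rw [hker, finrank_span_pair (linearIndependent_pair_of_dotProduct_eq_zero hnorm hξu hu)]
end

section
/- Let n ≥ 4 and let A be an n×n real symmetric matrix all of whose eigenvalues are simple (every eigenspace of A is one-dimensional). Then for every x ∈ ℝⁿ and every μ ∈ ℝ, the eigenspace ker(A − x xᵀ − μ I) has dimension at most n − 2. In particular A − x xᵀ cannot act as a scalar on any (n−1)-dimensional subspace of ℝⁿ. -/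
open Matrix

lemma vecMulVec_mulVec' {n : ℕ} (x y v : Fin n → ℝ) :
    (vecMulVec x y).mulVec v = (y ⬝ᵥ v) • x := by
  ext i
  simp [vecMulVec, mulVec, dotProduct, Finset.mul_sum, Finset.sum_mul]
  ring_nf

lemma key_bound {n : ℕ} (hn : 4 ≤ n) (A : Matrix (Fin n) (Fin n) ℝ)
    (hsimple : ∀ μ : ℝ,
      Module.finrank ℝ (LinearMap.ker ((A - μ • 1).mulVecLin)) ≤ 1)
    (x : Fin n → ℝ) (μ : ℝ) :
    Module.finrank ℝ
      (LinearMap.ker ((A - vecMulVec x x - μ • 1).mulVecLin)) ≤ n - 2 := by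
  set K := LinearMap.ker ((A - vecMulVec x x - μ • 1).mulVecLin) with hK
  -- linear functional v ↦ x ⬝ᵥ v restricted to K
  let φ : (Fin n → ℝ) →ₗ[ℝ] ℝ :=
    { toFun := fun v => x ⬝ᵥ v
      map_add' := fun a b => dotProduct_add x a b
      map_smul' := fun c a => by simp }
  let g : K →ₗ[ℝ] ℝ := φ.comp K.subtype
  have hrn : Module.finrank ℝ (LinearMap.range g) + Module.finrank ℝ (LinearMap.ker g)
      = Module.finrank ℝ K := LinearMap.finrank_range_add_finrank_ker g
  have hrange : Module.finrank ℝ (LinearMap.range g) ≤ 1 := by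
    have := Submodule.finrank_le (LinearMap.range g)
    simpa using this
  -- image of ker g lies in the eigenspace of A
  have hsub : (LinearMap.ker g).map K.subtype ≤ LinearMap.ker ((A - μ • 1).mulVecLin) := by
    rintro v hv
    obtain ⟨w, hw, rfl⟩ := hv
    have hwK : (A - vecMulVec x x - μ • 1).mulVec (w : Fin n → ℝ) = 0 := w.2
    have hdot : x ⬝ᵥ (w : Fin n → ℝ) = 0 := hw
    have : (A - μ • 1).mulVec (w : Fin n → ℝ)
        = (A - vecMulVec x x - μ • 1).mulVec (w : Fin n → ℝ)
          + (vecMulVec x x).mulVec (w : Fin n → ℝ) := by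
      rw [sub_mulVec, sub_mulVec, sub_mulVec]
      abel
    rw [LinearMap.mem_ker, mulVecLin_apply]
    show (A - μ • 1) *ᵥ (w : Fin n → ℝ) = 0
    rw [this, hwK, vecMulVec_mulVec', hdot]
    simp
  have hmap : Module.finrank ℝ ((LinearMap.ker g).map K.subtype)
      = Module.finrank ℝ (LinearMap.ker g) := Submodule.finrank_map_subtype_eq K _
  have h1 : Module.finrank ℝ (LinearMap.ker g) ≤ 1 := by
    rw [← hmap]
    exact le_trans (Submodule.finrank_mono hsub) (hsimple μ)
  omega

/-- If `n ≥ 4` and `A` is an `n × n` real symmetric matrix all of whose eigenspaces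
are one-dimensional, then for every `x` and `μ` the eigenspace
`ker(A - x xᵀ - μ I)` has dimension at most `n - 2`; in particular `A - x xᵀ`
cannot act as a scalar on any `(n-1)`-dimensional subspace. -/
theorem stmt7 {n : ℕ} (hn : 4 ≤ n) (A : Matrix (Fin n) (Fin n) ℝ) (hA : Aᵀ = A)
    (hsimple : ∀ μ : ℝ,
      Module.finrank ℝ (LinearMap.ker ((A - μ • 1).mulVecLin)) ≤ 1) :
    (∀ (x : Fin n → ℝ) (μ : ℝ),
      Module.finrank ℝ
        (LinearMap.ker ((A - vecMulVec x x - μ • 1).mulVecLin)) ≤ n - 2) ∧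
    (∀ (x : Fin n → ℝ) (μ : ℝ) (W : Submodule ℝ (Fin n → ℝ)),
      Module.finrank ℝ W = n - 1 →
        ¬ ∀ v ∈ W, (A - vecMulVec x x).mulVec v = μ • v) := by
  refine ⟨key_bound hn A hsimple, ?_⟩
  intro x μ W hW hall
  have hWK : W ≤ LinearMap.ker ((A - vecMulVec x x - μ • 1).mulVecLin) := by
    intro v hv
    rw [LinearMap.mem_ker, mulVecLin_apply, sub_mulVec, hall v hv]
    ext i
    simp [mulVec, dotProduct, Finset.sum_mul, one_apply, Finset.mul_sum, mul_comm]
  have := le_trans (Submodule.finrank_mono hWK) (key_bound hn A hsimple x μ)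
  omega
end

section
/- Let A be an n×n real symmetric matrix, let z ∈ ℝ be a nonzero number that is not an eigenvalue of A, let x ∈ ℝⁿ, and let ξ ∈ ℝⁿ be a unit vector. Then Moser's identity holds: (1/z) · det(L(x, ξ) − z I) / det(A − z I) = Q_z(ξ) (1 + Q_z(x)) − Q_z(x, ξ)², where Q_z(u, v) = ⟨(z I − A)⁻¹ u, v⟩ and Q_z(u) = Q_z(u, u). -/
/-!
Put `K = z • 1 - A` and `a = (A - x xᵀ) ξ`. Expanding `P_ξ (A - x xᵀ) P_ξ` shows that
`z • 1 - L(x, ξ) = K + U V` is a rank-three perturbation of `K`, with columns `U = (x, ξ, a)`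
and rows `V = (x, a - ⟨ξ, a⟩ ξ, ξ)`. By the matrix determinant lemma
`det (L - z) / det (A - z) = det (z - L) / det K = det (1 + V K⁻¹ U)`, a `3 × 3` determinant
whose entries are values of `Q_z`. Since `K⁻¹ a = z K⁻¹ ξ - ξ - ⟨x, ξ⟩ K⁻¹ x`, they reduce to
`Q_z(x)`, `Q_z(ξ)`, `Q_z(x, ξ)`, and the determinant collapses to
`z (Q_z(ξ) (1 + Q_z(x)) - Q_z(x, ξ)²)`.
-/

open Matrix

/-- The confocal quadratic form `Q_z(u, v) = ⟨(zI - A)⁻¹ u, v⟩`. -/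
noncomputable def confocalQ {n : ℕ} (A : Matrix (Fin n) (Fin n) ℝ) (z : ℝ)
    (u v : Fin n → ℝ) : ℝ :=
  (z • (1 : Matrix (Fin n) (Fin n) ℝ) - A)⁻¹.mulVec u ⬝ᵥ v

theorem transpose_of_mul_of {α k m n : Type*} [NonUnitalNonAssocSemiring α] [Fintype k]
    (u : k → m → α) (v : k → n → α) :
    (of u)ᵀ * of v = ∑ i, vecMulVec (u i) (v i) := by
  ext p q
  simp [mul_apply, vecMulVec_apply, Matrix.sum_apply]

theorem of_mul_mul_transpose_of_apply {α k n : Type*} [NonUnitalSemiring α] [Fintype n]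
    (v u : k → n → α) (R : Matrix n n α) (i j : k) :
    (of v * R * (of u)ᵀ) i j = v i ⬝ᵥ R *ᵥ u j := by
  rw [dotProduct_mulVec]
  rfl

theorem det_sub_div_det_sub {K n : Type*} [Field K] [Fintype n] [DecidableEq n]
    (X X' Y : Matrix n n K) : (X - Y).det / (X' - Y).det = (Y - X).det / (Y - X').det := by
  rw [← neg_sub Y X, ← neg_sub Y X', det_neg, det_neg,
    mul_div_mul_left _ _ (pow_ne_zero _ (neg_ne_zero.mpr one_ne_zero))]

section

variable {n : ℕ}

theorem projPerp_mul_mul_projPerp (M : Matrix (Fin n) (Fin n) ℝ) (ξ : Fin n → ℝ) :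
    projPerp ξ * M * projPerp ξ =
      M - vecMulVec ξ (ξ ᵥ* M) - vecMulVec (M *ᵥ ξ) ξ + (ξ ⬝ᵥ M *ᵥ ξ) • vecMulVec ξ ξ := by
  rw [projPerp, sub_mul, one_mul, vecMulVec_mul, mul_sub, mul_one, sub_mul,
    vecMulVec_mul_vecMulVec, mul_vecMulVec, vecMulVec_smul, ← dotProduct_mulVec]
  abel

theorem smul_one_sub_moserLax {A : Matrix (Fin n) (Fin n) ℝ} (hA : Aᵀ = A) (z : ℝ)
    {x ξ a : Fin n → ℝ} (ha : (A - vecMulVec x x) *ᵥ ξ = a) :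
    z • 1 - moserLax A x ξ = (z • 1 - A) + (of ![x, ξ, a])ᵀ * of ![x, a - (ξ ⬝ᵥ a) • ξ, ξ] := by
  have hM : (A - vecMulVec x x)ᵀ = A - vecMulVec x x := by
    rw [transpose_sub, hA, transpose_vecMulVec]
  have hξM : ξ ᵥ* (A - vecMulVec x x) = a := by rw [← hM, vecMul_transpose, ha]
  rw [moserLax, projPerp_mul_mul_projPerp, hξM, ha, transpose_of_mul_of, Fin.sum_univ_three]
  simp only [cons_val_zero, cons_val_one, cons_val_two, tail_cons, head_cons, vecMulVec_sub,
    vecMulVec_smul]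
  abel

theorem isUnit_det_smul_one_sub {A : Matrix (Fin n) (Fin n) ℝ} {z : ℝ}
    (hz : z ∉ spectrum ℝ A) : IsUnit (z • 1 - A).det := by
  rw [← isUnit_iff_isUnit_det, ← Algebra.algebraMap_eq_smul_one]
  exact spectrum.notMem_iff.mp hz

theorem confocalQ_comm {A : Matrix (Fin n) (Fin n) ℝ} (hA : Aᵀ = A) (z : ℝ) (u v : Fin n → ℝ) :
    confocalQ A z u v = confocalQ A z v u := by
  have hR : (z • (1 : Matrix (Fin n) (Fin n) ℝ) - A)⁻¹ᵀ = (z • 1 - A)⁻¹ := by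
    rw [transpose_nonsing_inv, transpose_sub, hA, transpose_smul, transpose_one]
  rw [confocalQ, confocalQ, dotProduct_comm, dotProduct_mulVec, ← mulVec_transpose, hR]

theorem confocalQ_sub_smul_right (A : Matrix (Fin n) (Fin n) ℝ) (z c : ℝ) (u v w : Fin n → ℝ) :
    confocalQ A z u (v - c • w) = confocalQ A z u v - c * confocalQ A z u w := by
  rw [confocalQ, confocalQ, confocalQ, dotProduct_sub, dotProduct_smul, smul_eq_mul]

theorem confocalQ_mulVec_left {A : Matrix (Fin n) (Fin n) ℝ} {z : ℝ}
    (hK : IsUnit (z • 1 - A).det) (u w : Fin n → ℝ) :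
    confocalQ A z (A *ᵥ u) w = z * confocalQ A z u w - u ⬝ᵥ w := by
  have hAu : A *ᵥ u = z • u - (z • 1 - A) *ᵥ u := by
    rw [sub_mulVec, smul_mulVec, one_mulVec, sub_sub_cancel]
  rw [confocalQ, confocalQ, hAu, mulVec_sub, mulVec_smul, mulVec_mulVec, nonsing_inv_mul _ hK,
    one_mulVec, sub_dotProduct, smul_dotProduct, smul_eq_mul]

theorem det_moserLax_capacitance {A : Matrix (Fin n) (Fin n) ℝ} (hA : Aᵀ = A) {z : ℝ}
    (hK : IsUnit (z • 1 - A).det) {x ξ a : Fin n → ℝ} (hξ : ξ ⬝ᵥ ξ = 1)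
    (ha : (A - vecMulVec x x) *ᵥ ξ = a) :
    (1 + of ![x, a - (ξ ⬝ᵥ a) • ξ, ξ] * (z • 1 - A)⁻¹ * (of ![x, ξ, a])ᵀ).det =
      z * (confocalQ A z ξ ξ * (1 + confocalQ A z x x) - confocalQ A z x ξ ^ 2) := by
  have hQ_left_a (w : Fin n → ℝ) :
      confocalQ A z a w = z * confocalQ A z ξ w - ξ ⬝ᵥ w - (x ⬝ᵥ ξ) * confocalQ A z x w := by
    rw [← ha, sub_mulVec, vecMulVec_mulVec, op_smul_eq_smul, confocalQ, mulVec_sub, mulVec_smul,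
      sub_dotProduct, smul_dotProduct, smul_eq_mul, ← confocalQ, ← confocalQ,
      confocalQ_mulVec_left hK]
  have hQ_right_a (u : Fin n → ℝ) : confocalQ A z u a = confocalQ A z a u :=
    confocalQ_comm hA z u a
  have hentry (v u : Fin 3 → Fin n → ℝ) (i j : Fin 3) :
      (of v * (z • 1 - A)⁻¹ * (of u)ᵀ) i j = confocalQ A z (u j) (v i) := by
    rw [of_mul_mul_transpose_of_apply, confocalQ, dotProduct_comm]
  simp only [det_fin_three, Matrix.add_apply, hentry, one_apply_eq, ne_eq, Fin.reduceEq,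
    not_false_eq_true, one_apply_ne, Fin.isValue, cons_val_zero, cons_val_one, cons_val,
    confocalQ_sub_smul_right, hQ_right_a, hQ_left_a, hξ, dotProduct_sub, dotProduct_smul,
    smul_eq_mul, confocalQ_comm hA z ξ x, dotProduct_comm ξ a, dotProduct_comm ξ x]
  ring

end

/-- Moser's identity: for `z ≠ 0` not an eigenvalue of the symmetric matrix `A`,
`(1/z) det(L(x,ξ) - zI)/det(A - zI) = Q_z(ξ)(1 + Q_z(x)) - Q_z(x, ξ)²`. -/
theorem stmt8 {n : ℕ} (A : Matrix (Fin n) (Fin n) ℝ) (hA : Aᵀ = A)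
    (z : ℝ) (hz0 : z ≠ 0) (hz : z ∉ spectrum ℝ A)
    (x ξ : Fin n → ℝ) (hξ : ξ ⬝ᵥ ξ = 1) :
    (1 / z) * ((moserLax A x ξ - z • 1).det / (A - z • 1).det) =
      confocalQ A z ξ ξ * (1 + confocalQ A z x x) - (confocalQ A z x ξ) ^ 2 := by
  have hK := isUnit_det_smul_one_sub hz
  rw [det_sub_div_det_sub, smul_one_sub_moserLax hA z rfl, det_add_mul _ _ hK,
    mul_div_cancel_left₀ _ hK.ne_zero, det_moserLax_capacitance hA hK hξ rfl, one_div,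
    inv_mul_cancel_left₀ hz0]
end
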